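/- Let k ≥ 2 be an integer. Then ᾱ({1, k, k+1}) = 2k/(6k+3) if k ≡ 0 (mod 3); ᾱ({1, k, k+1}) = 1/3 if k ≡ 1 (mod 3); and ᾱ({1, k, k+1}) = (k+1)/(3k+6) if k ≡ 2 (mod 3). -/

import Mathlib

open Filter

/-- The upper density of a set of integers. -/
noncomputable def density (A : Set ℤ) : ℝ :=
  Filter.limsup
    (fun N : ℕ => ((A ∩ Set.Icc (-(N : ℤ)) (N : ℤ)).ncard : ℝ) / (2 * (N : ℝ) + 1))
    Filter.atTop

/-- A set of integers is independent in the distance graph `G(S)` if no two distinct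
elements differ by an element of `S`. -/
def IsIndepSet (S : Finset ℕ) (A : Set ℤ) : Prop :=
  ∀ a ∈ A, ∀ b ∈ A, a ≠ b → (a - b).natAbs ∉ S

/-- The independence ratio of the distance graph `G(S)`. -/
noncomputable def indRatio (S : Finset ℕ) : ℝ :=
  sSup (density '' {A : Set ℤ | IsIndepSet S A})

/-!
Upper bounds. Put `m = 2k + 1`. Since `2d ≡ ±1, ±2 (mod m)` with `0 < d ≤ 2k` forces
`d ∈ {1, k, k + 1, 2k}`, for independent `A` and `t ∈ A` the map `x ↦ 2(x - t) mod m` embeds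
`A ∩ [t, t + 2k]` into `[0, m - 2]` as a 3-separated set; hence every window of `m`
consecutive integers meets `A` in at most `⌊(2k + 2)/3⌋` points, which is sharp unless
`k ≡ 2 (mod 3)`. In that case one passes to the 3-separated set `J = 2A ∪ (2A - m)`, in which
every odd point `x` is followed by the even point `x + m`. Scanning `J` from the left through its
even points, the next point is either even, at distance at least 4, or odd, and then the stretch
up to its even partner has length at least `m + 3` and holds at most `⌊(m + 3)/3⌋` points.
Either way `J` has at most `⌊(m + 3)/3⌋` points per `m + 3`, so the density of `A` is at most
`⌊(2k + 4)/3⌋ / (2k + 4)`.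

Lower bounds: in each case an explicit periodic independent set attains the bound.
-/

open Finset

section Density

variable {A : Set ℤ}

lemma tendsto_div_two_mul_add_one (d : ℝ) :
    Tendsto (fun N : ℕ => d / (2 * (N : ℝ) + 1)) atTop (nhds 0) :=
  tendsto_const_nhds.div_atTop <| tendsto_atTop_add_const_right _ _ <|
    (tendsto_natCast_atTop_atTop (R := ℝ)).const_mul_atTop two_pos

lemma density_le_of_ncard_le (c d : ℝ)
    (h : ∀ N : ℕ, ((A ∩ Set.Icc (-(N : ℤ)) N).ncard : ℝ) ≤ c * (2 * N + 1) + d) :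
    density A ≤ c := by
  have hlim : Tendsto (fun N : ℕ => c + d / (2 * (N : ℝ) + 1)) atTop (nhds c) := by
    simpa using (tendsto_div_two_mul_add_one d).const_add c
  calc density A ≤ limsup (fun N : ℕ => c + d / (2 * (N : ℝ) + 1)) atTop := by
        refine limsup_le_limsup (Eventually.of_forall fun N => ?_)
          (isCoboundedUnder_le_of_le atTop fun N => by positivity) hlim.isBoundedUnder_le
        rw [div_le_iff₀ (by positivity), add_mul, div_mul_cancel₀ _ (by positivity)]
        linarith [h N]
    _ = c := hlim.limsup_eq

lemma density_eq_of_abs_sub_le (c d : ℝ)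
    (h : ∀ N : ℕ, |((A ∩ Set.Icc (-(N : ℤ)) N).ncard : ℝ) - c * (2 * N + 1)| ≤ d) :
    density A = c := by
  refine Tendsto.limsup_eq <| tendsto_sub_nhds_zero_iff.mp <|
    squeeze_zero_norm (fun N => ?_) (tendsto_div_two_mul_add_one d)
  have hN : (0 : ℝ) < 2 * N + 1 := by positivity
  rw [Real.norm_eq_abs, div_sub' hN.ne', abs_div, abs_of_pos hN, mul_comm]
  exact div_le_div_of_nonneg_right (h N) hN.le

lemma ncard_inter_Ico_add (A : Set ℤ) {a b c : ℤ} (hab : a ≤ b) (hbc : b ≤ c) :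
    (A ∩ Set.Ico a c).ncard = (A ∩ Set.Ico a b).ncard + (A ∩ Set.Ico b c).ncard := by
  rw [← Set.Ico_union_Ico_eq_Ico hab hbc, Set.inter_union_distrib_left]
  exact Set.ncard_union_eq
    (Set.Ico_disjoint_Ico_same.mono Set.inter_subset_right Set.inter_subset_right)
    ((Set.finite_Ico a b).inter_of_right A) ((Set.finite_Ico b c).inter_of_right A)

lemma ncard_inter_Ico_add_mul (A : Set ℤ) (a : ℤ) (L n : ℕ) :
    (A ∩ Set.Ico a (a + n * L)).ncard =
      ∑ i ∈ range n, (A ∩ Set.Ico (a + i * L) (a + i * L + L)).ncard := by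
  induction n with
  | zero => simp
  | succ n ih =>
    rw [sum_range_succ, ← ih, ← ncard_inter_Ico_add A (by nlinarith) (by omega)]
    push_cast
    ring_nf

lemma ncard_inter_Icc_le_of_window {L w : ℕ} (hL : 0 < L)
    (hw : ∀ t : ℤ, (A ∩ Set.Ico t (t + L)).ncard ≤ w) (N : ℕ) :
    (A ∩ Set.Icc (-(N : ℤ)) N).ncard ≤ ((2 * N + 1) / L + 1) * w := by
  have hcover : (2 * N + 1 : ℤ) < ((2 * N + 1) / L + 1 : ℕ) * L := by
    have := Nat.lt_div_mul_add (a := 2 * N + 1) hL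
    push_cast
    exact_mod_cast (by linarith : 2 * N + 1 < ((2 * N + 1) / L + 1) * L)
  calc (A ∩ Set.Icc (-(N : ℤ)) N).ncard
      ≤ (A ∩ Set.Ico (-(N : ℤ)) (-N + ((2 * N + 1) / L + 1 : ℕ) * L)).ncard :=
        Set.ncard_le_ncard (Set.inter_subset_inter_right _ fun x hx => ⟨hx.1, by linarith [hx.2]⟩)
          ((Set.finite_Ico _ _).inter_of_right A)
    _ = ∑ i ∈ range ((2 * N + 1) / L + 1),
          (A ∩ Set.Ico (-N + i * L) (-N + i * L + L)).ncard := ncard_inter_Ico_add_mul ..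
    _ ≤ ∑ _i ∈ range ((2 * N + 1) / L + 1), w := sum_le_sum fun i _ => hw _
    _ = ((2 * N + 1) / L + 1) * w := by simp

lemma density_le_of_window {L w : ℕ} (hL : 0 < L)
    (hw : ∀ t : ℤ, (A ∩ Set.Ico t (t + L)).ncard ≤ w) : density A ≤ w / L := by
  refine density_le_of_ncard_le _ w fun N => ?_
  have hcount : ((A ∩ Set.Icc (-(N : ℤ)) N).ncard : ℝ) ≤ (((2 * N + 1) / L : ℕ) + 1) * w := by
    exact_mod_cast ncard_inter_Icc_le_of_window hL hw N
  have hblocks : (((2 * N + 1) / L : ℕ) : ℝ) * L ≤ 2 * N + 1 := by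
    exact_mod_cast Nat.div_mul_le_self (2 * N + 1) L
  have hL' : (0 : ℝ) < L := by exact_mod_cast hL
  rw [div_mul_eq_mul_div, ← sub_le_iff_le_add, le_div_iff₀ hL']
  nlinarith [w.cast_nonneg (α := ℝ)]

end Density

def periodicSet (p : ℕ) (B : Finset ℤ) : Set ℤ := {x | x % (p : ℤ) ∈ B}

section Periodic

variable {p : ℕ} {B : Finset ℤ}

lemma ncard_periodicSet_inter_Ico (hB : ∀ r ∈ B, 0 ≤ r ∧ r < p) (t : ℤ) :
    (periodicSet p B ∩ Set.Ico t (t + p)).ncard = #B := by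
  rw [← Set.ncard_coe_finset B, ← Set.InjOn.ncard_image (f := (· % (p : ℤ)))]
  · congr 1
    ext r
    refine ⟨fun ⟨x, ⟨hx, _⟩, hxr⟩ => hxr ▸ hx, fun hr => ⟨t + (r - t) % p, ⟨?_, ?_⟩, ?_⟩⟩
    all_goals obtain ⟨hr0, hrp⟩ := hB r hr
    · simpa [periodicSet, Int.add_emod_emod, Int.emod_eq_of_lt hr0 hrp] using hr
    · have := Int.emod_nonneg (r - t) (by omega : (p : ℤ) ≠ 0)
      have := Int.emod_lt_of_pos (r - t) (by omega : (0 : ℤ) < p)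
      constructor <;> omega
    · simp [Int.add_emod_emod, Int.emod_eq_of_lt hr0 hrp]
  · rintro x ⟨-, hx⟩ y ⟨-, hy⟩ hxy
    have hdvd : (p : ℤ) ∣ y - x := Int.ModEq.dvd hxy
    have := Int.eq_zero_of_dvd_of_natAbs_lt_natAbs hdvd (by simp at hx hy; omega)
    omega

lemma density_periodicSet (hp : 0 < p) (hB : ∀ r ∈ B, 0 ≤ r ∧ r < p) :
    density (periodicSet p B) = #B / p := by
  refine density_eq_of_abs_sub_le _ #B fun N => ?_
  set T := (2 * N + 1) / p
  have hupper := ncard_inter_Icc_le_of_window hp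
    (fun t => (ncard_periodicSet_inter_Ico hB t).le) N
  have hlower : T * #B ≤ (periodicSet p B ∩ Set.Icc (-(N : ℤ)) N).ncard := by
    have hTp : (T : ℤ) * p ≤ 2 * N + 1 := by exact_mod_cast Nat.div_mul_le_self (2 * N + 1) p
    calc T * #B
        = ∑ i ∈ range T, (periodicSet p B ∩ Set.Ico (-N + i * p) (-N + i * p + p)).ncard := by
          simp [ncard_periodicSet_inter_Ico hB]
      _ = (periodicSet p B ∩ Set.Ico (-(N : ℤ)) (-N + T * p)).ncard :=
          (ncard_inter_Ico_add_mul ..).symm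
      _ ≤ (periodicSet p B ∩ Set.Icc (-(N : ℤ)) N).ncard := Set.ncard_le_ncard
          (Set.inter_subset_inter_right _ fun x hx => ⟨hx.1, by linarith [hx.2]⟩)
          ((Set.finite_Icc _ _).inter_of_right _)
  have hTp : (T : ℝ) * p ≤ 2 * N + 1 := by exact_mod_cast Nat.div_mul_le_self (2 * N + 1) p
  have hTp' : (2 * N + 1 : ℝ) < (T + 1) * p := by
    exact_mod_cast (by rw [add_mul, one_mul]; exact Nat.lt_div_mul_add hp :
      2 * N + 1 < (T + 1) * p)
  have hupper' : ((periodicSet p B ∩ Set.Icc (-(N : ℤ)) N).ncard : ℝ) ≤ (T + 1) * #B := by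
    exact_mod_cast hupper
  have hlower' : (T : ℝ) * #B ≤ (periodicSet p B ∩ Set.Icc (-(N : ℤ)) N).ncard := by
    exact_mod_cast hlower
  have hp' : (0 : ℝ) < p := by exact_mod_cast hp
  have hT : (T : ℝ) ≤ (2 * N + 1) / p := by rw [le_div_iff₀ hp']; exact hTp
  have hT' : (2 * N + 1 : ℝ) / p < T + 1 := by rw [div_lt_iff₀ hp']; exact hTp'
  rw [abs_le, div_mul_comm]
  constructor <;> nlinarith [(#B).cast_nonneg (α := ℝ)]

end Periodic

lemma indRatio_eq_of_forall_density_le {S : Finset ℕ} {c : ℝ} {A₀ : Set ℤ}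
    (hA₀ : IsIndepSet S A₀) (hc : density A₀ = c)
    (hle : ∀ A, IsIndepSet S A → density A ≤ c) : indRatio S = c :=
  IsGreatest.csSup_eq ⟨⟨A₀, hA₀, hc⟩, by rintro _ ⟨A, hA, rfl⟩; exact hle A hA⟩

lemma isIndepSet_of_forall_add_notMem {S : Finset ℕ} {A : Set ℤ}
    (h : ∀ a ∈ A, ∀ d ∈ S, a + (d : ℤ) ∉ A) : IsIndepSet S A := by
  intro a ha b hb hab hd
  obtain hba | hab : b + ((a - b).natAbs : ℤ) = a ∨ a + ((a - b).natAbs : ℤ) = b := by omega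
  · exact h b hb _ hd (by rwa [hba])
  · exact h a ha _ hd (by rwa [hab])

lemma isIndepSet_periodicSet {S : Finset ℕ} {p : ℕ} {B : Finset ℤ} (hS : ∀ d ∈ S, d < p)
    (hB : ∀ r ∈ B, ∀ d ∈ S, r + d ∉ B ∧ r + d - p ∉ B) : IsIndepSet S (periodicSet p B) := by
  refine isIndepSet_of_forall_add_notMem fun a ha d hd had => ?_
  have hp : (0 : ℤ) < p := by have := hS d hd; omega
  have h0 := Int.emod_nonneg a hp.ne'
  have h1 := Int.emod_lt_of_pos a hp
  have hdp : (d : ℤ) < p := by exact_mod_cast hS d hd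
  simp only [periodicSet, Set.mem_ofPred_eq, ← Int.emod_add_emod a] at ha had
  rcases lt_or_ge (a % p + d) p with h | h
  · rw [Int.emod_eq_of_lt (by omega) h] at had
    exact (hB _ ha d hd).1 had
  · rw [← Int.sub_emod_right, Int.emod_eq_of_lt (by omega) (by omega)] at had
    exact (hB _ ha d hd).2 had

lemma IsIndepSet.natAbs_sub_ne {k : ℕ} {A : Set ℤ} (hA : IsIndepSet {1, k, k + 1} A) {a b : ℤ}
    (ha : a ∈ A) (hb : b ∈ A) (hab : a ≠ b) :
    (a - b).natAbs ≠ 1 ∧ (a - b).natAbs ≠ k ∧ (a - b).natAbs ≠ k + 1 := by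
  simpa [not_or] using hA a ha b hb hab

lemma card_mul_le_of_separated {F : Finset ℤ} {g : ℕ} {a b : ℤ}
    (hF : ∀ x ∈ F, a ≤ x ∧ x ≤ b) (hsep : (F : Set ℤ).Pairwise fun x y => g ≤ (x - y).natAbs) :
    g * #F ≤ (b + g - a).toNat := by
  have hdisj : (F : Set ℤ).PairwiseDisjoint fun x => Ico x (x + g) := by
    intro x hx y hy hxy
    have := hsep hx hy hxy
    exact disjoint_left.mpr fun z hzx hzy => by simp only [mem_Ico] at hzx hzy; omega
  calc g * #F = #(F.biUnion fun x => Ico x (x + g)) := by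
        rw [card_biUnion hdisj]; simp [mul_comm]
    _ ≤ #(Ico a (b + g)) := card_le_card <| biUnion_subset.mpr fun x hx z hz => by
        have := hF x hx; simp only [mem_Ico] at hz ⊢; omega
    _ = (b + g - a).toNat := Int.card_Ico _ _

lemma mul_card_filter_lt_le_of_step {J : Finset ℤ} {P : ℤ → Prop} {a b M : ℤ} (hb : 0 ≤ b)
    (hstep : ∀ X, P X → (∃ x ∈ J, X < x) →
      ∃ Y, P Y ∧ X < Y ∧ Y ≤ M ∧ a * #{x ∈ J | X < x ∧ x ≤ Y} ≤ b * (Y - X))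
    {X : ℤ} (hX : P X) (hXM : X ≤ M) : a * #{x ∈ J | X < x} ≤ b * (M - X) := by
  induction h : (M - X).toNat using Nat.strong_induction_on generalizing X with
  | _ n ih =>
  by_cases hJ : ∃ x ∈ J, X < x
  · obtain ⟨Y, hY, hXY, hYM, hcount⟩ := hstep X hX hJ
    have hsplit : #{x ∈ J | X < x} = #{x ∈ J | X < x ∧ x ≤ Y} + #{x ∈ J | Y < x} := by
      have hdisj : Disjoint {x ∈ J | X < x ∧ x ≤ Y} {x ∈ J | Y < x} :=
        disjoint_filter.mpr fun x _ hx hx' => by omega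
      rw [← card_union_of_disjoint hdisj, ← filter_or]
      exact congrArg card (filter_congr fun x _ => by omega)
    have := ih _ (by omega) hY hYM rfl
    rw [hsplit]
    push_cast
    linarith
  · push Not at hJ
    rw [filter_false_of_mem fun x hx => not_lt.mpr (hJ x hx)]
    simpa using mul_nonneg hb (by omega : 0 ≤ M - X)

lemma mul_card_le_of_separated_of_odd_add_mem {J : Finset ℤ} {m lo hi : ℤ} (hm : 5 ≤ m)
    (hmodd : m % 2 = 1) (hlo : lo ≤ hi) (hJ : ∀ x ∈ J, lo ≤ x ∧ x ≤ hi)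
    (hsep : (J : Set ℤ).Pairwise fun x y => 3 ≤ (x - y).natAbs)
    (hodd : ∀ x ∈ J, x % 2 = 1 → x + m ∈ J) :
    (m + 3) * #J ≤ (m + 3) / 3 * (hi - lo + 4) := by
  set B := (m + 3) / 3
  let P : ℤ → Prop := fun X => X % 2 = 0 ∧ ∀ x ∈ J, X < x → X + 3 ≤ x
  have hP : ∀ y ∈ J, y % 2 = 0 → P y := fun y hy hye =>
    ⟨hye, fun x hx hyx => by have := hsep hx hy (by omega); omega⟩
  have hstep : ∀ X, P X → (∃ x ∈ J, X < x) →
      ∃ Y, P Y ∧ X < Y ∧ Y ≤ hi ∧ (m + 3) * #{x ∈ J | X < x ∧ x ≤ Y} ≤ B * (Y - X) := by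
    rintro X ⟨hXe, hXgap⟩ hne
    have hne' : {x ∈ J | X < x}.Nonempty := by simpa [Finset.Nonempty] using hne
    set z := {x ∈ J | X < x}.min' hne'
    obtain ⟨hzJ, hXz⟩ : z ∈ J ∧ X < z := mem_filter.mp (min'_mem _ hne')
    have hzmin : ∀ x ∈ J, X < x → z ≤ x := fun x hx hXx => min'_le _ _ (by simp [hx, hXx])
    have hz3 := hXgap z hzJ hXz
    rcases Int.emod_two_eq z with hze | hzo
    · refine ⟨z, hP z hzJ hze, hXz, (hJ z hzJ).2, ?_⟩
      have hsingle : {x ∈ J | X < x ∧ x ≤ z} = {z} := by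
        ext x
        simp only [mem_filter, mem_singleton]
        exact ⟨fun ⟨hx, hXx, hxz⟩ => le_antisymm hxz (hzmin x hx hXx),
          by rintro rfl; exact ⟨hzJ, hXz, le_rfl⟩⟩
      rw [hsingle, card_singleton]
      calc (m + 3) * ((1 : ℕ) : ℤ) ≤ B * 4 := by omega
        _ ≤ B * (z - X) := mul_le_mul_of_nonneg_left (by omega) (by omega)
    · have hY := hodd z hzJ hzo
      refine ⟨z + m, hP _ hY (by omega), by omega, (hJ _ hY).2, ?_⟩
      have hcard := card_mul_le_of_separated (F := {x ∈ J | X < x ∧ x ≤ z + m}) (a := z)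
        (b := z + m) (fun x hx => by
          simp only [mem_filter] at hx; exact ⟨hzmin x hx.1 hx.2.1, hx.2.2⟩)
        (hsep.mono (coe_subset.mpr (filter_subset _ _)))
      calc (m + 3) * (#{x ∈ J | X < x ∧ x ≤ z + m} : ℤ) ≤ (m + 3) * B :=
            mul_le_mul_of_nonneg_left (by omega) (by omega)
        _ = B * (m + 3) := mul_comm _ _
        _ ≤ B * (z + m - X) := mul_le_mul_of_nonneg_left (by omega) (by omega)
  obtain ⟨X₀, hX₀e, hX₀⟩ : ∃ X₀, X₀ % 2 = 0 ∧ lo - 4 ≤ X₀ ∧ X₀ ≤ lo - 3 :=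
    ⟨lo - 4 + lo % 2, by omega, by omega⟩
  have hall : {x ∈ J | X₀ < x} = J := filter_true_of_mem fun x hx => by have := hJ x hx; omega
  have hchain := mul_card_filter_lt_le_of_step (by omega) hstep
    (⟨hX₀e, fun x hx _ => by have := hJ x hx; omega⟩ : P X₀) (by omega)
  rw [hall] at hchain
  calc (m + 3) * (#J : ℤ) ≤ B * (hi - X₀) := hchain
    _ ≤ B * (hi - lo + 4) := mul_le_mul_of_nonneg_left (by omega) (by omega)

namespace IsIndepSet

variable {k : ℕ} {A : Set ℤ}

lemma three_mul_card_le (hk : 1 ≤ k) (hA : IsIndepSet {1, k, k + 1} A) {F : Finset ℤ}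
    (hFA : ↑F ⊆ A) {t : ℤ} (ht : t ∈ F) (hF : ∀ x ∈ F, t ≤ x ∧ x ≤ t + 2 * k) :
    3 * #F ≤ 2 * k + 2 := by
  -- `φ x = 2 (x - t) mod (2k + 1)` for `x` in the window
  let φ : ℤ → ℤ := fun x => if x - t ≤ k then 2 * (x - t) else 2 * (x - t) - (2 * k + 1)
  have hdiff : ∀ x ∈ F, ∀ y ∈ F, x ≠ y →
      (x - y).natAbs ≠ 1 ∧ (x - y).natAbs ≠ k ∧ (x - y).natAbs ≠ k + 1 :=
    fun x hx y hy => hA.natAbs_sub_ne (hFA hx) (hFA hy)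
  have hsep : ∀ x ∈ F, ∀ y ∈ F, x ≠ y → 3 ≤ (φ x - φ y).natAbs := by
    intro x hx y hy hxy
    have := hdiff x hx y hy hxy
    have := hF x hx
    have := hF y hy
    simp only [φ]
    split_ifs <;> omega
  have hrange : ∀ x ∈ F, 0 ≤ φ x ∧ φ x ≤ 2 * k - 1 := by
    intro x hx
    have := hF x hx
    rcases eq_or_ne x t with rfl | hxt
    · simp only [φ]; split_ifs <;> omega
    · have := hdiff x hx t ht hxt
      simp only [φ]; split_ifs <;> omega
  have hinj : Set.InjOn φ F := fun x hx y hy hφ => by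
    by_contra hxy
    have := hsep x hx y hy hxy
    rw [hφ, sub_self] at this
    simp at this
  have := card_mul_le_of_separated (F := F.image φ) (g := 3) (a := 0) (b := 2 * k - 1)
    (by simpa using hrange) (by
      simp only [coe_image]
      rintro _ ⟨x, hx, rfl⟩ _ ⟨y, hy, rfl⟩ hφ
      exact hsep x hx y hy fun h => hφ (h ▸ rfl))
  rw [card_image_of_injOn hinj] at this
  omega

lemma ncard_inter_Ico_le (hk : 1 ≤ k) (hA : IsIndepSet {1, k, k + 1} A) (t : ℤ) :
    (A ∩ Set.Ico t (t + (2 * k + 1 : ℕ))).ncard ≤ (2 * k + 2) / 3 := by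
  have hfin := (Set.finite_Ico t (t + (2 * k + 1 : ℕ))).inter_of_right A
  rw [Set.ncard_eq_toFinset_card _ hfin]
  set F := hfin.toFinset
  have hmem : ∀ x ∈ F, x ∈ A ∧ t ≤ x ∧ x < t + (2 * k + 1 : ℕ) := by
    simp [F, Set.Finite.mem_toFinset]
  rcases F.eq_empty_or_nonempty with hF | hF
  · simp [hF]
  have hmin := hmem _ (min'_mem F hF)
  have := hA.three_mul_card_le hk (fun x hx => (hmem x hx).1) (min'_mem F hF)
    fun x hx => ⟨min'_le F x hx, by have := hmem x hx; omega⟩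
  omega

lemma density_le_window_bound (hk : 1 ≤ k) (hA : IsIndepSet {1, k, k + 1} A) :
    density A ≤ ((2 * k + 2) / 3 : ℕ) / (2 * k + 1 : ℕ) :=
  density_le_of_window (by omega) (hA.ncard_inter_Ico_le hk)

lemma mul_card_le_of_subset_Icc (hk : 2 ≤ k) (hA : IsIndepSet {1, k, k + 1} A) {F : Finset ℤ}
    (hFA : ↑F ⊆ A) {lo hi : ℤ} (hlo : lo ≤ hi) (hF : ∀ x ∈ F, lo ≤ x ∧ x ≤ hi) :
    (2 * k + 4) * (2 * #F : ℤ) ≤ (2 * k + 4) / 3 * (2 * (hi - lo) + 2 * k + 5) := by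
  set m : ℤ := 2 * k + 1
  set J := F.image (2 * ·) ∪ F.image (2 * · - m)
  have hmem : ∀ u, u ∈ J ↔ ∃ a ∈ F, u = 2 * a ∨ u = 2 * a - m := by
    intro u
    simp only [J, mem_union, mem_image]
    constructor
    · rintro (⟨a, ha, rfl⟩ | ⟨a, ha, rfl⟩) <;> exact ⟨a, ha, by simp⟩
    · rintro ⟨a, ha, rfl | rfl⟩
      exacts [Or.inl ⟨a, ha, rfl⟩, Or.inr ⟨a, ha, rfl⟩]
  have hcard : #J = 2 * #F := by
    rw [card_union_of_disjoint, card_image_of_injective _ fun a b h => by simp at h; omega,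
      card_image_of_injective _ fun a b h => by simp at h; omega, two_mul]
    refine disjoint_left.mpr fun u hu hu' => ?_
    simp only [mem_image] at hu hu'
    omega
  have hsep : (J : Set ℤ).Pairwise fun x y => 3 ≤ (x - y).natAbs := by
    intro u hu v hv huv
    obtain ⟨a, ha, hu⟩ := (hmem u).1 hu
    obtain ⟨b, hb, hv⟩ := (hmem v).1 hv
    rcases eq_or_ne a b with rfl | hab
    · omega
    · have := hA.natAbs_sub_ne (hFA ha) (hFA hb) hab
      omega
  have hodd : ∀ u ∈ J, u % 2 = 1 → u + m ∈ J := by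
    intro u hu hu_odd
    obtain ⟨a, ha, hu⟩ := (hmem u).1 hu
    exact (hmem _).2 ⟨a, ha, by omega⟩
  have hJ : ∀ u ∈ J, 2 * lo - m ≤ u ∧ u ≤ 2 * hi := by
    intro u hu
    obtain ⟨a, ha, hu⟩ := (hmem u).1 hu
    have := hF a ha
    omega
  have := mul_card_le_of_separated_of_odd_add_mem (by omega) (by omega) (by omega) hJ hsep hodd
  rw [hcard, show m + 3 = 2 * k + 4 by omega] at this
  push_cast at this
  convert this using 2
  simp only [m]
  ring

lemma density_le_chain_bound (hk : 2 ≤ k) (hA : IsIndepSet {1, k, k + 1} A) :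
    density A ≤ ((2 * k + 4) / 3 : ℕ) / (2 * k + 4 : ℝ) := by
  set B : ℕ := (2 * k + 4) / 3
  refine density_le_of_ncard_le _ B fun N => ?_
  have hfin := (Set.finite_Icc (-(N : ℤ)) N).inter_of_right A
  rw [Set.ncard_eq_toFinset_card _ hfin]
  set F := hfin.toFinset
  have hmem : ∀ x ∈ F, x ∈ A ∧ -(N : ℤ) ≤ x ∧ x ≤ N := by simp [F, Set.Finite.mem_toFinset]
  have hint := hA.mul_card_le_of_subset_Icc hk (F := F) (fun x hx => (hmem x hx).1) (lo := -N)
    (hi := N) (by omega) fun x hx => (hmem x hx).2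
  have hB : ((2 * k + 4 : ℤ) / 3) = (B : ℤ) := by omega
  rw [hB] at hint
  have hreal : (2 * k + 4 : ℝ) * (2 * #F) ≤ B * (2 * (N - -N) + 2 * k + 5) := by
    exact_mod_cast hint
  rw [div_mul_eq_mul_div, ← sub_le_iff_le_add, le_div_iff₀ (by positivity)]
  nlinarith [B.cast_nonneg (α := ℝ)]

end IsIndepSet

theorem indRatio_one_k_ksucc_of_mod_three_eq_zero {k : ℕ} (hk : 0 < k) (hk3 : k % 3 = 0) :
    indRatio {1, k, k + 1} = 2 * k / (6 * k + 3) := by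
  obtain ⟨s, rfl⟩ : ∃ s, k = 3 * s := ⟨k / 3, by omega⟩
  set B : Finset ℤ := (range s).image (fun i : ℕ => 3 * (i : ℤ)) ∪
    (range s).image (fun i : ℕ => 3 * (i : ℤ) + 3 * s + 2)
  have hB : ∀ r ∈ B, 0 ≤ r ∧ r < (2 * (3 * s) + 1 : ℕ) := by
    simp only [B, mem_union, mem_image, mem_range]
    rintro _ (⟨i, hi, rfl⟩ | ⟨i, hi, rfl⟩) <;> push_cast <;> omega
  have hcard : #B = 2 * s := by
    rw [card_union_of_disjoint, card_image_of_injective _ fun a b h => by simp at h; omega,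
      card_image_of_injective _ fun a b h => by simp at h; omega, card_range, two_mul]
    refine disjoint_left.mpr fun r hr hr' => ?_
    simp only [mem_image, mem_range] at hr hr'
    omega
  refine indRatio_eq_of_forall_density_le (A₀ := periodicSet (2 * (3 * s) + 1) B) ?_ ?_
    fun A hA => (hA.density_le_window_bound (by omega)).trans_eq ?_
  · refine isIndepSet_periodicSet (by simp; omega) fun r hr d hd => ?_
    simp only [B, mem_union, mem_image, mem_range] at hr ⊢
    simp only [mem_insert, mem_singleton] at hd
    constructor <;> rintro (⟨j, hj, h⟩ | ⟨j, hj, h⟩) <;>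
      rcases hr with ⟨i, hi, rfl⟩ | ⟨i, hi, rfl⟩ <;> rcases hd with rfl | rfl | rfl <;>
      push_cast at h <;> omega
  · rw [density_periodicSet (by omega) hB, hcard]
    push_cast
    field_simp
    ring
  · rw [show (2 * (3 * s) + 2) / 3 = 2 * s by omega]
    push_cast
    field_simp
    ring

theorem indRatio_one_k_ksucc_of_mod_three_eq_one {k : ℕ} (hk3 : k % 3 = 1) :
    indRatio {1, k, k + 1} = 1 / 3 := by
  obtain ⟨s, rfl⟩ : ∃ s, k = 3 * s + 1 := ⟨k / 3, by omega⟩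
  refine indRatio_eq_of_forall_density_le (A₀ := periodicSet 3 {0}) ?_ ?_
    fun A hA => (hA.density_le_window_bound (by omega)).trans_eq ?_
  · refine isIndepSet_of_forall_add_notMem fun a ha d hd had => ?_
    simp only [periodicSet, Set.mem_ofPred_eq, mem_singleton] at ha had
    simp only [mem_insert, mem_singleton] at hd
    rcases hd with rfl | rfl | rfl <;> push_cast at had <;> omega
  · rw [density_periodicSet (by norm_num) (by simp)]
    simp
  · rw [show (2 * (3 * s + 1) + 2) / 3 = 2 * s + 1 by omega]
    push_cast
    field_simp
    ring

theorem indRatio_one_k_ksucc_of_mod_three_eq_two {k : ℕ} (hk3 : k % 3 = 2) :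
    indRatio {1, k, k + 1} = (k + 1) / (3 * k + 6) := by
  obtain ⟨s, rfl⟩ : ∃ s, k = 3 * s + 2 := ⟨k / 3, by omega⟩
  set B : Finset ℤ := (range (s + 1)).image (fun i : ℕ => 3 * (i : ℤ))
  have hB : ∀ r ∈ B, 0 ≤ r ∧ r < (3 * s + 2 + 2 : ℕ) := by
    simp only [B, mem_image, mem_range]
    rintro _ ⟨i, hi, rfl⟩
    push_cast
    omega
  refine indRatio_eq_of_forall_density_le (A₀ := periodicSet (3 * s + 2 + 2) B) ?_ ?_
    fun A hA => (hA.density_le_chain_bound (by omega)).trans_eq ?_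
  · refine isIndepSet_periodicSet (by simp) fun r hr d hd => ?_
    simp only [B, mem_image, mem_range] at hr ⊢
    obtain ⟨i, hi, rfl⟩ := hr
    simp only [mem_insert, mem_singleton] at hd
    constructor <;> rintro ⟨j, hj, h⟩ <;> rcases hd with rfl | rfl | rfl <;> push_cast at h <;>
      omega
  · rw [density_periodicSet (by omega) hB,
      card_image_of_injective _ fun a b h => by simp at h; omega, card_range]
    push_cast
    field_simp
    ring
  · rw [show (2 * (3 * s + 2) + 4) / 3 = 2 * s + 2 by omega]
    push_cast
    field_simp
    ring

/-- The independence ratio of `G({1, k, k+1})` for `k ≥ 2`, by residue of `k` mod 3. -/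
theorem indRatio_one_k_ksucc (k : ℕ) (hk : 2 ≤ k) :
    (k % 3 = 0 → indRatio ({1, k, k + 1} : Finset ℕ) = (2 * (k : ℝ)) / (6 * (k : ℝ) + 3)) ∧
    (k % 3 = 1 → indRatio ({1, k, k + 1} : Finset ℕ) = 1 / 3) ∧
    (k % 3 = 2 → indRatio ({1, k, k + 1} : Finset ℕ) = ((k : ℝ) + 1) / (3 * (k : ℝ) + 6)) :=
  ⟨indRatio_one_k_ksucc_of_mod_three_eq_zero (by omega), indRatio_one_k_ksucc_of_mod_three_eq_one,
    indRatio_one_k_ksucc_of_mod_three_eq_two⟩
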